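/- Let k ≥ 3 and let s, m be natural numbers with 1 ≤ m ≤ k−1. Suppose q is a natural number with q ≤ (2s)^m·X^{m/(m+1)} and b is an integer with (b,q) = 1. Then there is a constant C depending at most on s and k such that I_{s,m}(X;q,b) ≤ C·(Π_{j=m}^{k−2} q^{−1}(X/q)^j)·I_{s,k−1}(X;q,b), where the product is taken to be 1 if m > k−2. -/

import Mathlib

/-
Write `I_{s,m}` as the number of pairs `(x, y)` in the box `[0, X/q]^s` on which
`z ↦ (∑ (q z_i + b)^k, (∑ z_i^j)_{1 ≤ j < m})` agrees, and sort these pairs by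
`h = ∑ x_i^m - ∑ y_i^m`. Expanding `(q z + b)^k` binomially, the power sums below `m` cancel
and all terms beyond the `m`-th are divisible by `q^(m+1)`, so `q ∣ (k choose m) h` as
`(b, q) = 1`; since `|h| ≤ s (X/q)^m`, at most `O(q⁻¹ (X/q)^m + 1)` values of `h` occur.
By Cauchy–Schwarz no class is larger than the class `h = 0`, which is counted by
`I_{s,m+1}`. The bound on `q` makes `q⁻¹ (X/q)^j ≫ 1` for `j ≥ m`, so
`I_{s,j} ≪ q⁻¹ (X/q)^j I_{s,j+1}`; iterate from `m` to `k - 1`.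
-/

/-- I_{s,m}(X;q,b): the number of integral solutions of the system (8.1), i.e. of
∑_i ((q x_i + b)^k - (q y_i + b)^k) = 0 and ∑_i (x_i^j - y_i^j) = 0 (1 ≤ j ≤ m-1),
with 0 ≤ x_i, y_i ≤ X/q. -/
noncomputable def Icount (s k m : ℕ) (X : ℝ) (q : ℕ) (b : ℤ) : ℕ :=
  Set.ncard {xy : (Fin s → ℤ) × (Fin s → ℤ) |
    (∀ i, 0 ≤ xy.1 i ∧ (xy.1 i : ℝ) ≤ X / q) ∧
    (∀ i, 0 ≤ xy.2 i ∧ (xy.2 i : ℝ) ≤ X / q) ∧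
    (∑ i, (((q:ℤ) * xy.1 i + b)^k - ((q:ℤ) * xy.2 i + b)^k) = 0) ∧
    ∀ j ∈ Finset.Icc 1 (m-1), ∑ i, ((xy.1 i)^j - (xy.2 i)^j) = 0}

open Finset

section
variable {α G : Type*} [AddCommGroup G] [DecidableEq G]

theorem card_filter_sub_eq_le (B : Finset α) (Φ : α → G) (w : G) :
    #{p ∈ B ×ˢ B | Φ p.1 - Φ p.2 = w} ≤ #{p ∈ B ×ˢ B | Φ p.1 = Φ p.2} := by
  set r : G → ℕ := fun v => #{x ∈ B | Φ x = v}
  set V := B.image Φ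
  have hr : ∀ v, r v ≠ 0 → v ∈ V := fun v hv => by
    obtain ⟨x, hx⟩ := Finset.card_ne_zero.1 hv
    rw [mem_filter] at hx
    exact mem_image.2 ⟨x, hx⟩
  have hcount : ∀ u, #{p ∈ B ×ˢ B | Φ p.1 - Φ p.2 = u} = ∑ v ∈ V, r v * r (v - u) := by
    intro u
    rw [card_eq_sum_card_fiberwise (f := fun p => Φ p.1) (t := V)
      fun p hp => mem_image_of_mem Φ (mem_product.1 (mem_filter.1 hp).1).1]
    refine sum_congr rfl fun v _ => ?_
    rw [← card_product, filter_filter]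
    congr 1
    ext p
    simp only [mem_filter, mem_product]
    constructor
    · rintro ⟨⟨h1, h2⟩, hu, rfl⟩
      exact ⟨⟨h1, rfl⟩, h2, by rw [← hu]; abel⟩
    · rintro ⟨⟨h1, rfl⟩, h2, h3⟩
      exact ⟨⟨h1, h2⟩, by rw [h3]; abel, rfl⟩
  have hshift : ∑ v ∈ V, r (v - w) ^ 2 ≤ ∑ v ∈ V, r v ^ 2 := by
    rw [← sum_image (f := fun u => r u ^ 2) fun x _ y _ h => sub_left_injective h]
    exact sum_le_sum_of_ne_zero fun u _ hu => hr u (pow_ne_zero_iff two_ne_zero |>.1 hu)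
  have hdiag : #{p ∈ B ×ˢ B | Φ p.1 = Φ p.2} = ∑ v ∈ V, r v ^ 2 := by
    simp_rw [← sub_eq_zero (a := Φ _), hcount, sub_zero, sq]
  -- `2ab ≤ a² + b²` termwise, and translating `r` by `w` does not increase its `ℓ²` norm
  rw [hcount, hdiag]
  have := sum_le_sum fun v (_ : v ∈ V) => two_mul_le_add_sq (r v) (r (v - w))
  simp only [mul_assoc, ← mul_sum, sum_add_distrib] at this
  omega

theorem card_filter_eq_le_card_mul_card_filter_and_eq {β : Type*} [AddCommGroup β]
    [DecidableEq β]
    (B : Finset α) (f : α → β) (g : α → G) (D : Finset G)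
    (hD : ∀ x ∈ B, ∀ y ∈ B, f x = f y → g x - g y ∈ D) :
    #{p ∈ B ×ˢ B | f p.1 = f p.2} ≤
      #D * #{p ∈ B ×ˢ B | f p.1 = f p.2 ∧ g p.1 = g p.2} := by
  rw [card_eq_sum_card_fiberwise (f := fun p => g p.1 - g p.2) (t := D) fun p hp => by
    obtain ⟨hx, hf⟩ := mem_filter.1 hp
    exact hD _ (mem_product.1 hx).1 _ (mem_product.1 hx).2 hf]
  refine sum_le_card_nsmul D _ _ fun d _ => ?_
  have hpair : ∀ p : α × α, f p.1 = f p.2 ∧ g p.1 - g p.2 = d ↔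
      (fun x => (f x, g x)) p.1 - (fun x => (f x, g x)) p.2 = (0, d) := by
    simp [Prod.ext_iff, sub_eq_zero]
  have hpair0 : ∀ p : α × α, f p.1 = f p.2 ∧ g p.1 = g p.2 ↔
      (fun x => (f x, g x)) p.1 = (fun x => (f x, g x)) p.2 := by
    simp [Prod.ext_iff]
  simp only [filter_filter, hpair, hpair0]
  exact card_filter_sub_eq_le B (fun x => (f x, g x)) (0, d)

end

theorem card_filter_dvd_mul_Icc_le {q c A : ℤ} (hq : 0 < q) (hc : 0 < c) (hA : 0 ≤ A) :
    (#{d ∈ Icc (-A) A | q ∣ c * d} : ℝ) ≤ 2 * c * A / q + 1 := by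
  set N := c * A / q with hNdef
  have hcard : #{d ∈ Icc (-A) A | q ∣ c * d} ≤ #(Icc (-N) N) := by
    refine card_le_card_of_injOn (fun d => c * d / q) (fun d hd => ?_)
      fun d₁ hd₁ d₂ hd₂ h => ?_
    · obtain ⟨hdA, t, ht⟩ := mem_filter.1 hd
      obtain ⟨hlo, hhi⟩ := mem_Icc.1 hdA
      simp only [coe_Icc, Set.mem_Icc, ht, Int.mul_ediv_cancel_left _ hq.ne', neg_le, hNdef,
        Int.le_ediv_iff_mul_le hq]
      constructor <;> nlinarith
    · obtain ⟨-, h₁⟩ := mem_filter.1 hd₁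
      obtain ⟨-, h₂⟩ := mem_filter.1 hd₂
      exact mul_left_cancel₀ hc.ne' ((Int.ediv_left_inj h₁ h₂).1 h)
  have hqR : (0 : ℝ) < q := by exact_mod_cast hq
  have hN : (N : ℝ) ≤ c * A / q := by
    rw [le_div_iff₀ hqR]
    exact_mod_cast Int.ediv_mul_le (c * A) hq.ne'
  have hN0 : 0 ≤ N := Int.ediv_nonneg (mul_nonneg hc.le hA) hq.le
  rw [Int.card_Icc, show N + 1 - -N = 2 * N + 1 by ring] at hcard
  calc (#{d ∈ Icc (-A) A | q ∣ c * d} : ℝ) ≤ ((2 * N + 1).toNat : ℤ) := by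
        exact_mod_cast hcard
    _ = 2 * N + 1 := by rw [Int.toNat_of_nonneg (by omega)]; push_cast; ring
    _ ≤ 2 * c * A / q + 1 := by rw [mul_assoc, mul_div_assoc]; linarith

theorem le_prod_mul_of_le_mul_succ {R : Type*} [CommSemiring R] [PartialOrder R] [IsOrderedRing R]
    {f g : ℕ → R} {m n : ℕ} (hmn : m ≤ n) (hg : ∀ j ∈ Ico m n, 0 ≤ g j)
    (hf : ∀ j ∈ Ico m n, f j ≤ g j * f (j + 1)) :
    f m ≤ (∏ j ∈ Ico m n, g j) * f n := by
  induction n, hmn using Nat.le_induction with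
  | base => simp
  | succ n hmn ih =>
    have hsub : Ico m n ⊆ Ico m (n + 1) := Ico_subset_Ico_right n.le_succ
    have hn : n ∈ Ico m (n + 1) := mem_Ico.2 ⟨hmn, n.lt_succ_self⟩
    calc f m ≤ (∏ j ∈ Ico m n, g j) * f n :=
          ih (fun j hj => hg j (hsub hj)) fun j hj => hf j (hsub hj)
      _ ≤ (∏ j ∈ Ico m n, g j) * (g n * f (n + 1)) :=
          mul_le_mul_of_nonneg_left (hf n hn) (prod_nonneg fun j hj => hg j (hsub hj))
      _ = (∏ j ∈ Ico m (n + 1), g j) * f (n + 1) := by rw [prod_Ico_succ_top hmn, mul_assoc]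

theorem one_le_pow_succ_mul_inv_mul_div_pow {q c X : ℝ} {m j : ℕ} (hq : 0 < q) (hX : 1 ≤ X)
    (hqX : q ≤ c * X ^ ((m : ℝ) / (m + 1))) (hmj : m ≤ j) :
    1 ≤ c ^ (j + 1) * (q⁻¹ * (X / q) ^ j) := by
  have hc : 0 ≤ c := nonneg_of_mul_nonneg_left (hq.le.trans hqX) (by positivity)
  have hexp : (m : ℝ) / (m + 1) * (j + 1) ≤ j := by
    rw [div_mul_eq_mul_div, div_le_iff₀ (by positivity)]
    nlinarith [(Nat.cast_le.2 hmj : (m : ℝ) ≤ j)]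
  have hpow : q ^ (j + 1) ≤ c ^ (j + 1) * X ^ j := calc
    q ^ (j + 1) ≤ (c * X ^ ((m : ℝ) / (m + 1))) ^ (j + 1) := pow_le_pow_left₀ hq.le hqX _
    _ = c ^ (j + 1) * X ^ ((m : ℝ) / (m + 1) * (j + 1)) := by
      rw [mul_pow, ← Real.rpow_natCast (X ^ _) (j + 1), ← Real.rpow_mul (by linarith)]
      push_cast
      rfl
    _ ≤ c ^ (j + 1) * X ^ j := by
      gcongr
      rw [← Real.rpow_natCast]
      exact Real.rpow_le_rpow_of_exponent_le hX hexp
  rwa [div_pow, ← div_eq_inv_mul, div_div, ← pow_succ, ← mul_div_assoc,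
    one_le_div (by positivity)]

noncomputable def intBox (ι : Type*) [Fintype ι] [DecidableEq ι] (T : ℤ) :
    Finset (ι → ℤ) :=
  Fintype.piFinset fun _ => Icc 0 T

section
variable {ι : Type*} [Fintype ι]

theorem sum_mul_add_pow_eq (k : ℕ) (q b : ℤ) (z : ι → ℤ) :
    ∑ i, (q * z i + b) ^ k =
      ∑ t ∈ range (k + 1), q ^ t * b ^ (k - t) * k.choose t * ∑ i, z i ^ t := by
  simp_rw [add_pow, mul_sum, mul_pow]
  rw [sum_comm]
  refine sum_congr rfl fun t _ => sum_congr rfl fun i _ => by ring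

theorem dvd_choose_mul_sub_of_sum_pow_eq {k m : ℕ} {q b : ℤ} (hm : m ≤ k) (hq : q ≠ 0)
    (hb : IsCoprime b q) {x y : ι → ℤ}
    (hk : ∑ i, (q * x i + b) ^ k = ∑ i, (q * y i + b) ^ k)
    (hlow : ∀ j ∈ Icc 1 (m - 1), ∑ i, x i ^ j = ∑ i, y i ^ j) :
    q ∣ k.choose m * (∑ i, x i ^ m - ∑ i, y i ^ m) := by
  set τ : ℕ → ℤ := fun t =>
    q ^ t * b ^ (k - t) * k.choose t * (∑ i, x i ^ t - ∑ i, y i ^ t)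
  have hτ : ∑ t ∈ range (k + 1), τ t = 0 := by
    simp only [τ, mul_sub, sum_sub_distrib, ← sum_mul_add_pow_eq, hk, sub_self]
  -- the terms below `t = m` vanish, those above it are divisible by `q ^ (m + 1)`
  have hrest : q ^ (m + 1) ∣ ∑ t ∈ (range (k + 1)).erase m, τ t := by
    refine dvd_sum fun t ht => ?_
    obtain ⟨htm, -⟩ := mem_erase.1 ht
    rcases htm.lt_or_gt with hlt | hgt
    · rcases Nat.eq_zero_or_pos t with rfl | ht0
      · simp [τ]
      · simp [τ, hlow t (mem_Icc.2 ⟨ht0, by omega⟩)]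
    · exact (((pow_dvd_pow q hgt).mul_right _).mul_right _).mul_right _
  have hmid :
      q ^ m * q ∣ q ^ m * (b ^ (k - m) * (k.choose m * (∑ i, x i ^ m - ∑ i, y i ^ m))) := by
    have hτm : q ^ m * (b ^ (k - m) * (k.choose m * (∑ i, x i ^ m - ∑ i, y i ^ m))) =
        -∑ t ∈ (range (k + 1)).erase m, τ t := by
      rw [eq_neg_iff_add_eq_zero, ← hτ,
        ← add_sum_erase (range (k + 1)) τ (mem_range.2 (Nat.lt_succ_of_le hm))]
      simp only [τ]
      ring
    rw [← pow_succ, hτm]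
    exact dvd_neg.2 hrest
  exact hb.symm.pow_right.dvd_of_dvd_mul_left ((mul_dvd_mul_iff_left (pow_ne_zero m hq)).1 hmid)

def momentMap (k : ℕ) (q b : ℤ) (J : Finset ℕ) (x : ι → ℤ) : ℤ × (J → ℤ) :=
  (∑ i, (q * x i + b) ^ k, fun j => ∑ i, x i ^ (j : ℕ))

theorem momentMap_eq_iff {k : ℕ} {q b : ℤ} {J : Finset ℕ} {x y : ι → ℤ} :
    momentMap k q b J x = momentMap k q b J y ↔
      ∑ i, (q * x i + b) ^ k = ∑ i, (q * y i + b) ^ k ∧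
        ∀ j ∈ J, ∑ i, x i ^ j = ∑ i, y i ^ j := by
  simp [momentMap, funext_iff]

variable [DecidableEq ι]

theorem abs_sum_pow_sub_sum_pow_le {T : ℤ} {x y : ι → ℤ} (hx : x ∈ intBox ι T)
    (hy : y ∈ intBox ι T) (m : ℕ) :
    |∑ i, x i ^ m - ∑ i, y i ^ m| ≤ Fintype.card ι * T ^ m := by
  simp only [intBox, Fintype.mem_piFinset, mem_Icc] at hx hy
  rw [← sum_sub_distrib, ← nsmul_eq_mul, ← card_univ]
  refine (abs_sum_le_sum_abs _ _).trans (sum_le_card_nsmul _ _ _ fun i _ => ?_)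
  exact abs_sub_le_of_nonneg_of_le (pow_nonneg (hx i).1 m) (pow_le_pow_left₀ (hx i).1 (hx i).2 m)
    (pow_nonneg (hy i).1 m) (pow_le_pow_left₀ (hy i).1 (hy i).2 m)

theorem card_momentMap_eq_le_mul_card_succ {k m : ℕ} {q b T : ℤ} (hm : 1 ≤ m) (hmk : m ≤ k)
    (hq : 0 < q) (hb : IsCoprime b q) (hT : 0 ≤ T) :
    (#{p ∈ intBox ι T ×ˢ intBox ι T | momentMap k q b (Icc 1 (m - 1)) p.1 =
        momentMap k q b (Icc 1 (m - 1)) p.2} : ℝ) ≤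
      (2 * k.choose m * Fintype.card ι * T ^ m / q + 1) *
        #{p ∈ intBox ι T ×ˢ intBox ι T | momentMap k q b (Icc 1 m) p.1 =
          momentMap k q b (Icc 1 m) p.2} := by
  set A : ℤ := Fintype.card ι * T ^ m
  have hD := card_filter_eq_le_card_mul_card_filter_and_eq (intBox ι T)
    (momentMap k q b (Icc 1 (m - 1))) (fun x => ∑ i, x i ^ m)
    {d ∈ Icc (-A) A | q ∣ k.choose m * d}
    fun x hx y hy hxy => by
      rw [momentMap_eq_iff] at hxy
      exact mem_filter.2 ⟨mem_Icc.2 (abs_le.1 (abs_sum_pow_sub_sum_pow_le hx hy m)),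
        dvd_choose_mul_sub_of_sum_pow_eq hmk hq.ne' hb hxy.1 hxy.2⟩
  have hIcc : Icc 1 m = insert m (Icc 1 (m - 1)) := by ext; simp; omega
  have hsucc : ∀ x y : ι → ℤ, momentMap k q b (Icc 1 m) x = momentMap k q b (Icc 1 m) y ↔
      momentMap k q b (Icc 1 (m - 1)) x = momentMap k q b (Icc 1 (m - 1)) y ∧
        ∑ i, x i ^ m = ∑ i, y i ^ m := by
    intro x y
    simp only [momentMap_eq_iff, hIcc, forall_mem_insert]
    tauto
  simp only [hsucc]
  have hcard := card_filter_dvd_mul_Icc_le hq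
    (by exact_mod_cast Nat.choose_pos hmk : (0 : ℤ) < k.choose m) (by positivity : 0 ≤ A)
  calc _ ≤ ((_ * _ : ℕ) : ℝ) := by exact_mod_cast hD
    _ ≤ _ := by
      push_cast
      gcongr
      simpa [A, mul_assoc] using hcard

end

theorem Icount_eq_card (s k m : ℕ) (X : ℝ) (q : ℕ) (b : ℤ) :
    Icount s k m X q b = #{p ∈ intBox (Fin s) ⌊X / q⌋ ×ˢ intBox (Fin s) ⌊X / q⌋ |
      momentMap k q b (Icc 1 (m - 1)) p.1 = momentMap k q b (Icc 1 (m - 1)) p.2} := by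
  rw [Icount, ← Set.ncard_coe_finset]
  congr 1
  ext p
  simp [intBox, momentMap_eq_iff, Int.le_floor, sum_sub_distrib, sub_eq_zero, and_assoc]

theorem Icount_le_mul_Icount_succ {s k m : ℕ} {X : ℝ} {q : ℕ} {b : ℤ} (hm : 1 ≤ m)
    (hmk : m ≤ k) (hX : 0 ≤ X) (hq : 0 < q) (hb : IsCoprime b q) :
    (Icount s k m X q b : ℝ) ≤
      (2 * k.choose m * s * ((q : ℝ)⁻¹ * (X / q) ^ m) + 1) * Icount s k (m + 1) X q b := by
  have hT : 0 ≤ ⌊X / q⌋ := Int.floor_nonneg.2 (by positivity)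
  have hTX : (⌊X / q⌋ : ℝ) ≤ X / q := Int.floor_le _
  rw [Icount_eq_card, Icount_eq_card, Nat.add_sub_cancel]
  refine (card_momentMap_eq_le_mul_card_succ hm hmk (by exact_mod_cast hq) hb hT).trans ?_
  push_cast
  rw [Fintype.card_fin]
  gcongr
  rw [mul_div_assoc, inv_mul_eq_div]
  gcongr

theorem lemma8_4_general (k s m : ℕ) (hm1 : 1 ≤ m) (hmk : m ≤ k - 1) :
    ∃ C : ℝ, 0 < C ∧ ∃ X₀ : ℝ, ∀ X : ℝ, X₀ ≤ X →
    ∀ q : ℕ, 0 < q → (q:ℝ) ≤ (2*(s:ℝ))^m * X ^ ((m:ℝ)/((m:ℝ)+1)) →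
    ∀ b : ℤ, IsCoprime b (q:ℤ) →
      (Icount s k m X q b : ℝ) ≤
        C * (∏ j ∈ Finset.Icc m (k-2), (q:ℝ)⁻¹ * (X/(q:ℝ))^j) *
          (Icount s k (k-1) X q b : ℝ) := by
  obtain rfl | hs := Nat.eq_zero_or_pos s
  · refine ⟨1, one_pos, 0, fun X _ q hq hqX => absurd hqX ?_⟩
    simp [zero_pow (Nat.one_le_iff_ne_zero.1 hm1), hq.ne']
  refine ⟨∏ j ∈ Icc m (k - 2), (2 * k.choose j * s + ((2 * s) ^ m) ^ (j + 1) : ℝ),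
    prod_pos fun j _ => by positivity, 1, fun X hX q hq hqX b hb => ?_⟩
  have hstep : ∀ j ∈ Ico m (k - 1), (Icount s k j X q b : ℝ) ≤
      ((2 * k.choose j * s + ((2 * s) ^ m) ^ (j + 1)) * ((q : ℝ)⁻¹ * (X / q) ^ j)) *
        Icount s k (j + 1) X q b := by
    intro j hj
    obtain ⟨hmj, hjk⟩ := mem_Ico.1 hj
    have hone := one_le_pow_succ_mul_inv_mul_div_pow (by exact_mod_cast hq) hX hqX hmj
    refine (Icount_le_mul_Icount_succ (by omega) (by omega) (by linarith) hq hb).trans ?_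
    gcongr
    linarith
  have hchain := le_prod_mul_of_le_mul_succ (f := fun j => (Icount s k j X q b : ℝ)) hmk
    (fun j _ => by positivity) hstep
  rwa [prod_mul_distrib, show k - 1 = k - 2 + 1 by omega, Ico_add_one_right_eq_Icc] at hchain

/-- Lemma 8.4: for 1 ≤ m ≤ k-1, q ≤ (2s)^m X^{m/(m+1)} and (b,q) = 1, one has
I_{s,m}(X;q,b) ≤ C (∏_{j=m}^{k-2} q^{-1} (X/q)^j) I_{s,k-1}(X;q,b). -/
theorem lemma8_4 (k s m : ℕ) (hk : 3 ≤ k) (hm1 : 1 ≤ m) (hmk : m ≤ k - 1) :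
    ∃ C : ℝ, 0 < C ∧ ∃ X₀ : ℝ, ∀ X : ℝ, X₀ ≤ X →
    ∀ q : ℕ, 0 < q → (q:ℝ) ≤ (2*(s:ℝ))^m * X ^ ((m:ℝ)/((m:ℝ)+1)) →
    ∀ b : ℤ, IsCoprime b (q:ℤ) →
      (Icount s k m X q b : ℝ) ≤
        C * (∏ j ∈ Finset.Icc m (k-2), (q:ℝ)⁻¹ * (X/(q:ℝ))^j) *
          (Icount s k (k-1) X q b : ℝ) :=
  lemma8_4_general k s m hm1 hmk
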